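/- A finite lattice L with depth function dep is graded if and only if for every level ℓ from 1 up to dep(0), the union of the covering sets of the elements of level ℓ equals level ℓ−1; i.e. ⋃_{a ∈ lev_ℓ(L)} cov(a) = lev_{ℓ−1}(L). -/

import Mathlib

/-!
The depth `dep a` strictly decreases along `<`, so in every interval `x < y` an element of
extreme depth gives a cover of `x` below `y` and an element covered by `y` above `x`.
If `ρ a = ρ b + 1` whenever `a ⋖ b`, climbing covers shows that `ρ` is strictly antitone, so
`ρ` grows by at least `dep a` along a longest chain from `1` down to `a`; climbing covers from `a`
to `1` gives the reverse inequality. Hence `dep a + ρ 1 = ρ a`: `dep` is itself a grading, and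
since every `b ≠ 0` covers something, the level condition follows. Conversely, the level
condition at `ℓ = dep a` says exactly that `dep` is a grading.
-/

namespace PaperLattice

variable {N : ℕ}

/-- Depth: one less than the maximum length of a chain from `t` down to `a` w.r.t. `le`. -/
noncomputable def dep (le : Fin N → Fin N → Prop) (t a : Fin N) : ℕ :=
  sSup {k | ∃ l : List (Fin N), List.Chain' (fun x y => le y x ∧ y ≠ x) l ∧
    l.head? = some t ∧ l.getLast? = some a ∧ l.length = k + 1}

/-- The `d`-th level: elements of depth `d`. -/
noncomputable def lev (le : Fin N → Fin N → Prop) (t : Fin N) (d : ℕ) : Set (Fin N) :=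
  {a | dep le t a = d}

/-- A labelled poset is levellised if depth is monotone in the nonzero labels. -/
def Levellised (le : Fin N → Fin N → Prop) (t : Fin N) : Prop :=
  ∀ i j : Fin N, 0 < (i : ℕ) → (i : ℕ) ≤ (j : ℕ) → dep le t i ≤ dep le t j

def lt' (le : Fin N → Fin N → Prop) (a b : Fin N) : Prop := le a b ∧ a ≠ b

/-- `b` covers `a`. -/
def CovByRel (le : Fin N → Fin N → Prop) (a b : Fin N) : Prop :=
  lt' le a b ∧ ∀ x, lt' le a x → lt' le x b → False

/-- The covering set of `a`. -/
def cov (le : Fin N → Fin N → Prop) (a : Fin N) : Set (Fin N) := {b | CovByRel le a b}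

/-- The up-set of `A`. -/
def upset (le : Fin N → Fin N → Prop) (A : Set (Fin N)) : Set (Fin N) :=
  {x | ∃ a ∈ A, le a x}

def AntichainRel (le : Fin N → Fin N → Prop) (A : Set (Fin N)) : Prop :=
  ∀ a ∈ A, ∀ b ∈ A, a ≠ b → ¬ le a b

/-- Binary weight of a set of labels. -/
noncomputable def wt (A : Set (Fin N)) : ℕ :=
  ∑ j : Fin N, A.indicator (fun j => 2 ^ (j : ℕ)) j

/-- `z` is a bottom and `o` a top for `le`. -/
def Bounds (le : Fin N → Fin N → Prop) (z o : Fin N) : Prop :=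
  (∀ a, le z a) ∧ (∀ a, le a o)

/-- The order obtained from `le` by adding `m` new atoms, the `i`-th having covering set `A i`. -/
def extLe {n m : ℕ} (le : Fin n → Fin n → Prop) (A : Fin m → Set (Fin n)) :
    Fin (n + m) → Fin (n + m) → Prop := fun x y =>
  if hx : (x : ℕ) < n then
    if hy : (y : ℕ) < n then le ⟨x, hx⟩ ⟨y, hy⟩
    else (x : ℕ) = 0
  else
    if hy : (y : ℕ) < n then
      (⟨y, hy⟩ : Fin n) ∈ upset le (A ⟨(x : ℕ) - n, by have := x.isLt; omega⟩)
    else x = y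

/-- The relabelled order `π(L)`. -/
def permLe {n : ℕ} (π : Equiv.Perm (Fin n)) (le : Fin n → Fin n → Prop) :
    Fin n → Fin n → Prop := fun a b => le (π.symm a) (π.symm b)


section Chains

variable {n : ℕ} (le : Fin n → Fin n → Prop)

def chainLengths (t a : Fin n) : Set ℕ :=
  {k | ∃ l : List (Fin n), l.IsChain (fun x y => le y x ∧ y ≠ x) ∧
    l.head? = some t ∧ l.getLast? = some a ∧ l.length = k + 1}

theorem dep_eq_sSup_chainLengths (t a : Fin n) : dep le t a = sSup (chainLengths le t a) :=
  rfl

variable {le}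

theorem zero_mem_chainLengths_iff {t a : Fin n} : 0 ∈ chainLengths le t a ↔ a = t := by
  constructor
  · rintro ⟨l, -, hh, hl, hlen⟩
    obtain ⟨x, rfl⟩ := List.length_eq_one_iff.1 hlen
    simp_all
  · rintro rfl
    exact ⟨[a], .singleton a, rfl, rfl, rfl⟩

theorem succ_mem_chainLengths_iff {t a : Fin n} {k : ℕ} :
    k + 1 ∈ chainLengths le t a ↔ ∃ b, k ∈ chainLengths le t b ∧ lt' le a b := by
  constructor
  · rintro ⟨l, hc, hh, hl, hlen⟩
    rcases l.eq_nil_or_concat with rfl | ⟨l, a', rfl⟩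
    · simp at hlen
    rcases l.eq_nil_or_concat with rfl | ⟨l, b, rfl⟩
    · simp at hlen
    obtain rfl : a' = a := by simpa using hl
    simp only [List.concat_eq_append] at hc hh hlen
    obtain ⟨hc, -, hba⟩ := List.isChain_append.1 hc
    refine ⟨b, ⟨l ++ [b], hc, ?_, by simp, by simpa using hlen⟩, ?_⟩
    · simpa [List.head?_append] using hh
    · simpa [lt'] using hba
  · rintro ⟨b, ⟨l, hc, hh, hl, hlen⟩, hab⟩
    refine ⟨l ++ [a], hc.append (.singleton a) ?_, ?_, by simp, by simp [hlen]⟩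
    · simpa [hl, lt'] using hab
    · simp [List.head?_append, hh]

theorem add_le_of_mem_chainLengths {f : Fin n → ℕ} (hf : ∀ x y, lt' le x y → f y < f x)
    {t : Fin n} : ∀ {k : ℕ} {a : Fin n}, k ∈ chainLengths le t a → f t + k ≤ f a
  | 0, a, h => by rw [zero_mem_chainLengths_iff.1 h]; rfl
  | k + 1, a, h => by
    obtain ⟨b, hb, hab⟩ := succ_mem_chainLengths_iff.1 h
    have := add_le_of_mem_chainLengths hf hb
    have := hf a b hab
    omega

end Chains

section Depth

variable {n : ℕ} (P : PartialOrder (Fin n))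

/-- Strict chains are duplicate-free, so they are shorter than `n`. -/
theorem lt_of_mem_chainLengths {t a : Fin n} {k : ℕ} (hk : k ∈ chainLengths P.le t a) :
    k < n := by
  obtain ⟨l, hc, -, -, hlen⟩ := hk
  have : IsTrans (Fin n) (fun x y => P.le y x ∧ y ≠ x) :=
    ⟨fun x y z hxy hyz => ⟨P.le_trans _ _ _ hyz.1 hxy.1,
      fun hzx => hxy.2 (P.le_antisymm _ _ hxy.1 (hzx ▸ hyz.1))⟩⟩
  have hnd : l.Nodup := (List.isChain_iff_pairwise.1 hc).imp fun h => h.2.symm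
  simpa [hlen] using hnd.length_le_card

theorem bddAbove_chainLengths (t a : Fin n) : BddAbove (chainLengths P.le t a) :=
  ⟨n, fun _ hk => (lt_of_mem_chainLengths P hk).le⟩

variable {P} {t : Fin n} (htop : ∀ x, P.le x t)
include htop

theorem dep_mem_chainLengths (a : Fin n) : dep P.le t a ∈ chainLengths P.le t a := by
  rw [dep_eq_sSup_chainLengths]
  refine Nat.sSup_mem ?_ (bddAbove_chainLengths P t a)
  by_cases hat : a = t
  · exact ⟨0, zero_mem_chainLengths_iff.2 hat⟩
  · exact ⟨1, succ_mem_chainLengths_iff.2 ⟨t, zero_mem_chainLengths_iff.2 rfl, htop a, hat⟩⟩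

theorem dep_lt_dep {a b : Fin n} (hab : lt' P.le a b) : dep P.le t b < dep P.le t a := by
  rw [dep_eq_sSup_chainLengths P.le t a]
  exact le_csSup (bddAbove_chainLengths P t a)
    (succ_mem_chainLengths_iff.2 ⟨b, dep_mem_chainLengths htop b, hab⟩)

theorem dep_le_dep {a b : Fin n} (hab : P.le a b) : dep P.le t b ≤ dep P.le t a := by
  rcases eq_or_ne a b with rfl | hne
  · rfl
  · exact (dep_lt_dep htop ⟨hab, hne⟩).le

theorem dep_add_le {f : Fin n → ℕ} (hf : ∀ x y, lt' P.le x y → f y < f x) (a : Fin n) :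
    dep P.le t a + f t ≤ f a := by
  have := add_le_of_mem_chainLengths hf (dep_mem_chainLengths htop a)
  omega

/-- An element of `(x, y]` of greatest depth covers `x`. -/
theorem exists_covBy_le_of_lt {x y : Fin n} (hxy : lt' P.le x y) :
    ∃ u, CovByRel P.le x u ∧ P.le u y := by
  classical
  obtain ⟨u, hu, hmax⟩ := Finset.exists_max_image
    {z | lt' P.le x z ∧ P.le z y} (dep P.le t) ⟨y, by simp [hxy]⟩
  simp only [Finset.mem_filter, Finset.mem_univ, true_and] at hu hmax
  refine ⟨u, ⟨hu.1, fun w hxw hwu => ?_⟩, hu.2⟩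
  have := hmax w ⟨hxw, P.le_trans _ _ _ hwu.1 hu.2⟩
  have := dep_lt_dep htop hwu
  omega

/-- An element of `[x, y)` of least depth is covered by `y`. -/
theorem exists_le_covBy_of_lt {x y : Fin n} (hxy : lt' P.le x y) :
    ∃ u, P.le x u ∧ CovByRel P.le u y := by
  classical
  obtain ⟨u, hu, hmin⟩ := Finset.exists_min_image
    {z | P.le x z ∧ lt' P.le z y} (dep P.le t) ⟨x, by simp [hxy]⟩
  simp only [Finset.mem_filter, Finset.mem_univ, true_and] at hu hmin
  refine ⟨u, hu.1, hu.2, fun w huw hwy => ?_⟩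
  have := hmin w ⟨P.le_trans _ _ _ hu.1 huw.1, hwy⟩
  have := dep_lt_dep htop huw
  omega

section Graded

variable {ρ : Fin n → ℕ} (hρ : ∀ a b, CovByRel P.le a b → ρ a = ρ b + 1)
include hρ

theorem rank_lt_rank {x y : Fin n} (hxy : lt' P.le x y) : ρ y < ρ x := by
  induction hd : dep P.le t x using Nat.strong_induction_on generalizing x with
  | _ d ih =>
    obtain ⟨u, hxu, huy⟩ := exists_covBy_le_of_lt htop hxy
    have hρxu := hρ x u hxu
    rcases eq_or_ne u y with rfl | huy'
    · omega
    · have := ih _ (hd ▸ dep_lt_dep htop hxu.1) ⟨huy, huy'⟩ rfl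
      omega

theorem dep_add_rank_top (a : Fin n) : dep P.le t a + ρ t = ρ a := by
  refine le_antisymm (dep_add_le htop (fun x y => rank_lt_rank htop hρ) a) ?_
  induction hd : dep P.le t a using Nat.strong_induction_on generalizing a with
  | _ d ih =>
    rcases eq_or_ne a t with rfl | hat
    · omega
    obtain ⟨u, hau, -⟩ := exists_covBy_le_of_lt htop (⟨htop a, hat⟩ : lt' P.le a t)
    have hdu := dep_lt_dep htop hau.1
    have := ih _ (hd ▸ hdu) u rfl
    have := hρ a u hau
    omega

theorem dep_eq_dep_add_one_of_covByRel {a b : Fin n} (hab : CovByRel P.le a b) :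
    dep P.le t a = dep P.le t b + 1 := by
  have := dep_add_rank_top htop hρ a
  have := dep_add_rank_top htop hρ b
  have := hρ a b hab
  omega

end Graded

end Depth

/-- a finite bounded lattice is graded iff for every level `ℓ` from `1` to
`dep 0`, the union of the covering sets of the elements of level `ℓ` is level `ℓ - 1`. -/
theorem statement11 {n : ℕ} (hn : 2 ≤ n) (L : Lattice (Fin n))
    (hb : Bounds L.le ⟨0, by omega⟩ ⟨1, by omega⟩) :
    (∃ ρ : Fin n → ℕ, ∀ a b : Fin n, CovByRel L.le a b → ρ a = ρ b + 1) ↔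
      (∀ ℓ : ℕ, 1 ≤ ℓ → ℓ ≤ dep L.le ⟨1, by omega⟩ ⟨0, by omega⟩ →
        {b : Fin n | ∃ a ∈ lev L.le ⟨1, by omega⟩ ℓ, b ∈ cov L.le a} =
          lev L.le ⟨1, by omega⟩ (ℓ - 1)) := by
  obtain ⟨hbot, htop⟩ := hb
  constructor
  · rintro ⟨ρ, hρ⟩ ℓ hℓ hℓ0
    ext b
    constructor
    · rintro ⟨a, rfl, hab⟩
      have := dep_eq_dep_add_one_of_covByRel htop hρ hab
      change dep L.le _ b = dep L.le _ a - 1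
      omega
    · intro (hbℓ : dep L.le _ b = ℓ - 1)
      have h0b : lt' L.le ⟨0, by omega⟩ b := ⟨hbot b, fun h0 => by rw [← h0] at hbℓ; omega⟩
      obtain ⟨a, -, hab⟩ := exists_le_covBy_of_lt htop h0b
      have := dep_eq_dep_add_one_of_covByRel htop hρ hab
      exact ⟨a, show dep L.le _ a = ℓ by omega, hab⟩
  · intro hlev
    refine ⟨dep L.le ⟨1, by omega⟩, fun a b hab => ?_⟩
    have hba := dep_lt_dep htop hab.1
    have ha0 := dep_le_dep htop (hbot a)
    have hbℓ : b ∈ lev L.le ⟨1, by omega⟩ (dep L.le ⟨1, by omega⟩ a - 1) := by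
      rw [← hlev _ (by omega) ha0]
      exact ⟨a, rfl, hab⟩
    change dep L.le _ b = dep L.le _ a - 1 at hbℓ
    omega

end PaperLattice
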